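/- arXiv:2103.05570 — 5 statements merged into one kernel-verified Lean document; each statement's English description precedes it below -/
import Mathlib

section
/- Let (ξ_j) be independent Bernoulli random variables with P(ξ_j = 1) = p_j, and let T_n be the trial on which the n-th failure occurs (i.e., T_n = inf{k : Σ_{i=1}^k (1 - ξ_i) = n}). If T_n is almost surely finite, then E[Σ_{j=1}^{T_n} ξ_j] = E[Σ_{j=1}^{T_n} p_j]. -/
open MeasureTheory ProbabilityTheory Finset

/-!
Write `∑_{j < T} ξ_j = ∑_j 1{j < T} ξ_j`. The `n`-th failure has not yet occurred before trial `j`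
exactly when fewer than `n` of the first `j` trials fail, so `{j < T}` is almost surely determined
by `ξ_0, …, ξ_{j-1}` and is therefore independent of `ξ_j`; hence
`E[1{j < T} ξ_j] = P(j < T) p_j = E[1{j < T} p_j]`. Exchanging sum and expectation is legitimate
because the summands are bounded and `∑_j P(j < T) = E[T] < ∞`.
-/

theorem Nat.exists_le_eq_of_le_of_le_succ {c : ℕ → ℕ} (hstep : ∀ k, c (k + 1) ≤ c k + 1)
    {n j : ℕ} (h0 : c 0 ≤ n) (hj : n ≤ c j) : ∃ k ≤ j, c k = n := by
  induction j with
  | zero => exact ⟨0, le_rfl, by omega⟩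
  | succ j ih =>
    by_cases h : n ≤ c j
    · obtain ⟨k, hkj, hk⟩ := ih h
      exact ⟨k, hkj.trans j.le_succ, hk⟩
    · exact ⟨j + 1, le_rfl, by have := hstep j; omega⟩

theorem Nat.lt_sInf_setOf_eq_iff {c : ℕ → ℕ} (hmono : Monotone c)
    (hstep : ∀ k, c (k + 1) ≤ c k + 1) {n : ℕ} (h0 : c 0 ≤ n) (hn : ∃ k, c k = n) (j : ℕ) :
    j < sInf {k | c k = n} ↔ c j < n := by
  constructor
  · intro hj
    by_contra! h
    obtain ⟨k, hkj, hk⟩ := Nat.exists_le_eq_of_le_of_le_succ hstep h0 h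
    exact ((Nat.sInf_le (show k ∈ {k | c k = n} from hk)).trans hkj).not_gt hj
  · intro hj
    by_contra! h
    have hhit : c (sInf {k | c k = n}) = n := Nat.sInf_mem hn
    exact (hhit ▸ hmono h).not_gt hj

theorem lt_sInf_setOf_sum_one_sub_eq_iff {x : ℕ → ℝ} (hx : ∀ i, x i = 0 ∨ x i = 1) {n : ℕ}
    (hn : ∃ k, ∑ i ∈ range k, (1 - x i) = n) (j : ℕ) :
    j < sInf {k | ∑ i ∈ range k, (1 - x i) = n} ↔ ∑ i ∈ range j, (1 - x i) < n := by
  classical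
  set zeros : ℕ → ℕ := fun k => #{i ∈ range k | x i = 0}
  have hzeros (k : ℕ) : ∑ i ∈ range k, (1 - x i) = zeros k := by
    rw [natCast_card_filter]
    refine sum_congr rfl fun i _ => ?_
    rcases hx i with h | h <;> simp [h]
  have hmono : Monotone zeros := fun a b hab =>
    card_le_card (filter_subset_filter _ (range_subset_range.mpr hab))
  have hstep (k : ℕ) : zeros (k + 1) ≤ zeros k + 1 := by
    simp only [zeros, range_add_one, filter_insert]
    split
    · exact card_insert_le _ _
    · omega
  simp only [hzeros, Nat.cast_inj, Nat.cast_lt] at hn ⊢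
  exact Nat.lt_sInf_setOf_eq_iff hmono hstep (by simp [zeros]) hn j

theorem sum_range_eq_tsum_indicator_setOf_lt {Ω M : Type*} [AddCommMonoid M] [TopologicalSpace M]
    (T : Ω → ℕ) (F : ℕ → Ω → M) (ω : Ω) :
    ∑ j ∈ range (T ω), F j ω = ∑' j, {ω | j < T ω}.indicator (F j) ω := by
  rw [sum_eq_tsum_indicator]
  congr with j
  simp [Set.indicator_apply]

section Tail

variable {Ω : Type*} [MeasurableSpace Ω] {μ : Measure Ω} {T : Ω → ℕ}

theorem lintegral_natCast_eq_tsum_measure_lt (hT : Measurable T) :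
    ∫⁻ ω, T ω ∂μ = ∑' j, μ {ω | j < T ω} := by
  have hset (j : ℕ) : MeasurableSet {ω | j < T ω} := hT measurableSet_Ioi
  simp_rw [← lintegral_indicator_one (hset _)]
  rw [← lintegral_tsum fun j => (measurable_one.indicator (hset j)).aemeasurable]
  congr with ω
  rw [← sum_range_eq_tsum_indicator_setOf_lt]
  simp

theorem integral_sum_range_eq_tsum_setIntegral {E : Type*} [NormedAddCommGroup E]
    [NormedSpace ℝ E] {F : ℕ → Ω → E} {C : ℝ} (hF : ∀ j, AEStronglyMeasurable (F j) μ)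
    (hFC : ∀ j ω, ‖F j ω‖ ≤ C) (hT : Measurable T)
    (hTint : Integrable (fun ω => (T ω : ℝ)) μ) :
    ∫ ω, ∑ j ∈ range (T ω), F j ω ∂μ = ∑' j, ∫ ω in {ω | j < T ω}, F j ω ∂μ := by
  have hset (j : ℕ) : MeasurableSet {ω | j < T ω} := hT measurableSet_Ioi
  have hterm (j : ℕ) : ∫⁻ ω, ‖{ω | j < T ω}.indicator (F j) ω‖ₑ ∂μ
      ≤ ENNReal.ofReal C * μ {ω | j < T ω} := calc
    _ = ∫⁻ ω in {ω | j < T ω}, ‖F j ω‖ₑ ∂μ := by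
      simp_rw [enorm_indicator_eq_indicator_enorm, lintegral_indicator (hset j)]
    _ ≤ ∫⁻ ω in {ω | j < T ω}, ENNReal.ofReal C ∂μ := lintegral_mono fun ω => by
      rw [← ofReal_norm]
      exact ENNReal.ofReal_le_ofReal (hFC j ω)
    _ = ENNReal.ofReal C * μ {ω | j < T ω} := setLIntegral_const _ _
  have hfinite : ∑' j, ∫⁻ ω, ‖{ω | j < T ω}.indicator (F j) ω‖ₑ ∂μ ≠ ⊤ := by
    refine ne_top_of_le_ne_top ?_ (ENNReal.tsum_le_tsum hterm)
    rw [ENNReal.tsum_mul_left, ← lintegral_natCast_eq_tsum_measure_lt hT]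
    refine ENNReal.mul_ne_top ENNReal.ofReal_ne_top (ne_of_lt ?_)
    simpa using hTint.lintegral_lt_top
  simp_rw [sum_range_eq_tsum_indicator_setOf_lt T F,
    integral_tsum (fun j => (hF j).indicator (hset j)) hfinite, integral_indicator (hset _)]

end Tail

section Independence

variable {Ω : Type*} [MeasurableSpace Ω] {μ : Measure Ω}

theorem ProbabilityTheory.iIndepFun.indepFun_range {β : Type*} [MeasurableSpace β]
    {ξ : ℕ → Ω → β} (hind : iIndepFun ξ μ) (hmeas : ∀ i, Measurable (ξ i)) (j : ℕ) :
    IndepFun (fun ω (i : range j) => ξ i ω) (ξ j) μ :=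
  (hind.indepFun_finset (range j) {j} (by simp) hmeas).comp measurable_id
    (measurable_pi_apply (⟨j, mem_singleton_self j⟩ : ({j} : Finset ℕ)))

theorem ProbabilityTheory.iIndepFun.setIntegral_preimage_range_eq_mul {ξ : ℕ → Ω → ℝ}
    (hind : iIndepFun ξ μ) (hmeas : ∀ i, Measurable (ξ i)) {j : ℕ} {s : Set (range j → ℝ)}
    (hs : MeasurableSet s) :
    ∫ ω in (fun ω (i : range j) => ξ i ω) ⁻¹' s, ξ j ω ∂μ
      = μ.real ((fun ω (i : range j) => ξ i ω) ⁻¹' s) * ∫ ω, ξ j ω ∂μ :=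
  ((IndepFun_iff_Indep _ _ _).1 (hind.indepFun_range hmeas j)).setIntegral_eq_mul (f := id)
    (measurable_pi_lambda (fun ω (i : range j) => ξ i ω) fun i => hmeas i).comap_le (hmeas j).aemeasurable ⟨s, hs, rfl⟩
    measurable_id.aestronglyMeasurable

end Independence

theorem wald_bernoulli_general
    {Ω : Type*} [MeasurableSpace Ω] (μ : Measure Ω)
    (p : ℕ → ℝ) (hp : ∀ i, p i ∈ Set.Ioo (0:ℝ) 1)
    (ξ : ℕ → Ω → ℝ) (hmeas : ∀ i, Measurable (ξ i))
    (hval : ∀ i ω, ξ i ω = 0 ∨ ξ i ω = 1)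
    (hind : iIndepFun ξ μ)
    (hmean : ∀ i, ∫ ω, ξ i ω ∂μ = p i)
    (n : ℕ) (T : Ω → ℕ) (hTmeas : Measurable T)
    (hT : ∀ ω, T ω = sInf {k : ℕ | ∑ i ∈ Finset.range k, (1 - ξ i ω) = (n:ℝ)})
    (hfin : ∀ᵐ ω ∂μ, ∃ k : ℕ, ∑ i ∈ Finset.range k, (1 - ξ i ω) = (n:ℝ))
    (hTint : Integrable (fun ω => (T ω : ℝ)) μ) :
    ∫ ω, (∑ j ∈ Finset.range (T ω), ξ j ω) ∂μ =
      ∫ ω, (∑ j ∈ Finset.range (T ω), p j) ∂μ := by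
  have hξ_le (j : ℕ) (ω : Ω) : ‖ξ j ω‖ ≤ 1 := by rcases hval j ω with h | h <;> simp [h]
  have hp_le (j : ℕ) : ‖p j‖ ≤ 1 := (Real.norm_of_nonneg (hp j).1.le).trans_le (hp j).2.le
  have hterm (j : ℕ) : ∫ ω in {ω | j < T ω}, ξ j ω ∂μ = ∫ ω in {ω | j < T ω}, p j ∂μ := by
    have hpast : {ω | j < T ω} =ᵐ[μ]
        (fun ω (i : range j) => ξ i ω) ⁻¹' {v | ∑ i, (1 - v i) < n} := by
      refine Filter.eventuallyEq_set.2 ?_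
      filter_upwards [hfin] with ω hω
      simp only [Set.mem_preimage, Set.mem_ofPred_eq,
        sum_coe_sort (range j) (fun i => 1 - ξ i ω), hT ω]
      exact lt_sInf_setOf_sum_one_sub_eq_iff (hval · ω) hω j
    rw [setIntegral_congr_set hpast, setIntegral_congr_set hpast, setIntegral_const, smul_eq_mul,
      ← hmean j]
    exact hind.setIntegral_preimage_range_eq_mul hmeas
      (measurableSet_lt (by fun_prop) measurable_const)
  rw [integral_sum_range_eq_tsum_setIntegral (fun j => (hmeas j).aestronglyMeasurable) hξ_le
      hTmeas hTint,
    integral_sum_range_eq_tsum_setIntegral (fun _ => aestronglyMeasurable_const)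
      (fun j _ => hp_le j) hTmeas hTint]
  exact tsum_congr hterm

theorem wald_bernoulli
    {Ω : Type*} [MeasurableSpace Ω] (μ : Measure Ω) [IsProbabilityMeasure μ]
    (p : ℕ → ℝ) (hp : ∀ i, p i ∈ Set.Ioo (0:ℝ) 1)
    (ξ : ℕ → Ω → ℝ) (hmeas : ∀ i, Measurable (ξ i))
    (hval : ∀ i ω, ξ i ω = 0 ∨ ξ i ω = 1)
    (hind : iIndepFun ξ μ)
    (hmean : ∀ i, ∫ ω, ξ i ω ∂μ = p i)
    (n : ℕ) (T : Ω → ℕ) (hTmeas : Measurable T)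
    (hT : ∀ ω, T ω = sInf {k : ℕ | ∑ i ∈ Finset.range k, (1 - ξ i ω) = (n:ℝ)})
    (hfin : ∀ᵐ ω ∂μ, ∃ k : ℕ, ∑ i ∈ Finset.range k, (1 - ξ i ω) = (n:ℝ))
    (hTint : Integrable (fun ω => (T ω : ℝ)) μ) :
    ∫ ω, (∑ j ∈ Finset.range (T ω), ξ j ω) ∂μ =
      ∫ ω, (∑ j ∈ Finset.range (T ω), p j) ∂μ :=
  wald_bernoulli_general μ p hp ξ hmeas hval hind hmean n T hTmeas hT hfin hTint
end

section
/- Let (ξ_i) be independent Bernoulli(p_i) random variables where the partial sums δ_k = Σ_{i=1}^k (2p_i - 1) are uniformly bounded. Let Z_1 count the number of successes before the n-th failure, i.e., Z_1 = Σ_{k=1}^{T_n} ξ_k where T_n is the trial of the n-th failure. Then there is a constant C > 0 (depending only on sup_k |δ_k|) such that for all ε > 0 and all sufficiently large n, P(|Z_1/n - 1| > ε) ≤ 2 exp(-C ε² n / (2 + ε)). -/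
/-!
Before the `n`-th failure the walk has made `T_n = Z_1 + n` trials. So `Z_1 > (1 + ε) n` forces
fewer than `n` failures among the first `⌊(2 + ε) n⌋` trials, and `Z_1 < (1 - ε) n` forces at
least `n` failures among the first `⌈(2 - ε) n⌉` trials (or no `n`-th failure at all, which again
means fewer than `n` failures among the first `⌊(2 + ε) n⌋`). Since `δ` is bounded, the expected
number of successes among the first `m` trials is `m / 2 + O(1)`, so each of these events is a
deviation of order `ε n` of a sum of at most `(2 + ε) n` independent `[0, 1]`-valued variables,
and Hoeffding's inequality bounds it by `exp (-ε² n / (8 (2 + ε)))`.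
-/

open MeasureTheory ProbabilityTheory Finset Filter

lemma exists_le_eq_of_le_add_one {f : ℕ → ℕ} (hf : ∀ k, f (k + 1) ≤ f k + 1) {n m : ℕ}
    (h0 : f 0 ≤ n) (hm : n ≤ f m) : ∃ k ≤ m, f k = n := by
  induction m with
  | zero => exact ⟨0, le_rfl, le_antisymm hm h0 |>.symm⟩
  | succ m ih =>
    by_cases hnm : n ≤ f m
    · obtain ⟨k, hk, hkn⟩ := ih hnm
      exact ⟨k, hk.trans m.le_succ, hkn⟩
    · exact ⟨m + 1, le_rfl, by have := hf m; omega⟩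

section FailureCount

noncomputable def failureCount (x : ℕ → ℝ) (k : ℕ) : ℕ :=
  ∑ i ∈ range k, if x i = 0 then 1 else 0

variable {x : ℕ → ℝ}

@[simp]
lemma failureCount_zero : failureCount x 0 = 0 := by
  simp [failureCount]

lemma failureCount_succ_le (k : ℕ) : failureCount x (k + 1) ≤ failureCount x k + 1 := by
  simp only [failureCount, sum_range_succ]
  split <;> omega

lemma failureCount_mono : Monotone (failureCount x) :=
  monotone_nat_of_le_succ fun k => by
    simp only [failureCount, sum_range_succ]
    omega

variable (hx : ∀ i, x i = 0 ∨ x i = 1)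
include hx

lemma cast_failureCount (k : ℕ) : (failureCount x k : ℝ) = ∑ i ∈ range k, (1 - x i) := by
  simp only [failureCount, Nat.cast_sum]
  refine sum_congr rfl fun i _ => ?_
  rcases hx i with h | h <;> simp [h]

lemma sum_range_eq_sub_failureCount (k : ℕ) :
    ∑ i ∈ range k, x i = k - failureCount x k := by
  rw [cast_failureCount hx, sum_sub_distrib]
  simp

lemma setOf_sum_range_one_sub_eq (n : ℕ) :
    {k : ℕ | ∑ i ∈ range k, (1 - x i) = (n : ℝ)} = {k | failureCount x k = n} := by
  ext k
  simp [← cast_failureCount hx]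

/-- If the `n`-th failure never comes, `sInf ∅ = 0` makes the hitting time `0`. -/
lemma sub_lt_sum_range_or_sum_range_le_sub_of_lt_abs {n : ℕ} (hn : 0 < n) {ε : ℝ}
    {m₁ m₂ : ℕ} (hm₁ : (m₁ : ℝ) ≤ (2 + ε) * n) (hm₂ : (2 - ε) * n ≤ (m₂ : ℝ))
    (h : ε < |(∑ k ∈ range (sInf {k : ℕ | ∑ i ∈ range k, (1 - x i) = (n : ℝ)}), x k) / n - 1|) :
    (m₁ : ℝ) - n < ∑ i ∈ range m₁, x i ∨ (ε < 1 ∧ ∑ i ∈ range m₂, x i ≤ (m₂ : ℝ) - n) := by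
  rw [setOf_sum_range_one_sub_eq hx] at h
  set T := sInf {k | failureCount x k = n}
  suffices failureCount x m₁ < n ∨ (ε < 1 ∧ n ≤ failureCount x m₂) by
    simp only [sum_range_eq_sub_failureCount hx, sub_lt_sub_iff_left, sub_le_sub_iff_left,
      Nat.cast_lt, Nat.cast_le]
    exact this
  have hreach (m : ℕ) (hm : n ≤ failureCount x m) : ∃ k ≤ m, failureCount x k = n :=
    exists_le_eq_of_le_add_one failureCount_succ_le (by simp) hm
  have hnR : (0 : ℝ) < n := by exact_mod_cast hn
  rcases Set.eq_empty_or_nonempty {k | failureCount x k = n} with hnever | hhit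
  · left
    by_contra! hle
    obtain ⟨k, -, hk⟩ := hreach m₁ hle
    exact hnever.subset hk
  have hT : failureCount x T = n := Nat.sInf_mem hhit
  have hZ : ∑ k ∈ range T, x k = T - n := by rw [sum_range_eq_sub_failureCount hx, hT]
  have hZ0 : 0 ≤ ∑ k ∈ range T, x k :=
    sum_nonneg fun i _ => by rcases hx i with h | h <;> simp [h]
  rw [hZ] at h hZ0
  rcases lt_abs.mp h with hup | hlow
  · left
    have hTR : (2 + ε) * n < T := by
      have := (lt_div_iff₀ hnR).mp (show 1 + ε < (T - n) / n by linarith)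
      linarith
    have hm₁T : m₁ < T := by exact_mod_cast hm₁.trans_lt hTR
    by_contra! hle
    obtain ⟨k, hk, hkn⟩ := hreach m₁ hle
    have hTk : T ≤ k := Nat.sInf_le hkn
    omega
  · have hTR : (T : ℝ) < (2 - ε) * n := by
      have := (div_lt_iff₀ hnR).mp (show (T - n) / n < 1 - ε by linarith)
      linarith
    have hε1 : ε < 1 := by nlinarith
    have hTm₂ : T ≤ m₂ := by exact_mod_cast (hTR.trans_le hm₂).le
    exact Or.inr ⟨hε1, hT ▸ failureCount_mono hTm₂⟩

end FailureCount

lemma neg_two_mul_sq_div_le {ε n m : ℝ} (hε : 0 < ε) (hn : 0 < n) (hm : 0 < m)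
    (hmn : m ≤ (2 + ε) * n) :
    -2 * (ε * n / 4) ^ 2 / m ≤ -(1 / 8) * ε ^ 2 * n / (2 + ε) := by
  rw [div_le_div_iff₀ hm (by positivity)]
  have := mul_le_mul_of_nonneg_left hmn (by positivity : 0 ≤ ε ^ 2 * n)
  nlinarith

lemma sum_range_two_mul_sub_one (a : ℕ → ℝ) (m : ℕ) :
    ∑ i ∈ range m, (2 * a i - 1) = 2 * ∑ i ∈ range m, a i - m := by
  simp [sum_sub_distrib, mul_sum]

section Hoeffding

variable {Ω : Type*} [MeasurableSpace Ω] {μ : Measure Ω} [IsProbabilityMeasure μ]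

lemma hasSubgaussianMGF_sub_integral_of_mem_unitInterval {X : Ω → ℝ} (hX : Measurable X)
    (h01 : ∀ ω, X ω ∈ Set.Icc 0 1) : HasSubgaussianMGF (fun ω => X ω - μ[X]) (1 / 4) μ := by
  convert hasSubgaussianMGF_of_mem_Icc hX.aemeasurable (ae_of_all μ h01)
  norm_num

variable {ξ : ℕ → Ω → ℝ} (hind : iIndepFun ξ μ) (hmeas : ∀ i, Measurable (ξ i))
  (h01 : ∀ i ω, ξ i ω ∈ Set.Icc 0 1)
include hind hmeas h01

lemma measureReal_le_sum_range_sub_integral_le (m : ℕ) {s : ℝ} (hs : 0 ≤ s) :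
    μ.real {ω | s ≤ ∑ i ∈ range m, (ξ i ω - μ[ξ i])} ≤ Real.exp (-2 * s ^ 2 / m) := by
  have hind' := hind.comp (fun i (x : ℝ) => x - μ[ξ i]) fun i => measurable_id.sub_const _
  have hsub (i : ℕ) : HasSubgaussianMGF (fun ω => ξ i ω - μ[ξ i]) (1 / 4) μ :=
    hasSubgaussianMGF_sub_integral_of_mem_unitInterval (hmeas i) (h01 i)
  refine (HasSubgaussianMGF.measure_sum_range_ge_le_of_iIndepFun (n := m) hind'
    (fun i _ => hsub i) hs).trans_eq ?_
  push_cast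
  ring_nf

lemma measureReal_le_sum_range_integral_sub_le (m : ℕ) {s : ℝ} (hs : 0 ≤ s) :
    μ.real {ω | s ≤ ∑ i ∈ range m, (μ[ξ i] - ξ i ω)} ≤ Real.exp (-2 * s ^ 2 / m) := by
  have hind' :=
    hind.comp (fun i (x : ℝ) => μ[ξ i] - x) fun i => measurable_const.sub measurable_id
  have hsub (i : ℕ) : HasSubgaussianMGF (fun ω => μ[ξ i] - ξ i ω) (1 / 4) μ :=
    (hasSubgaussianMGF_sub_integral_of_mem_unitInterval (hmeas i) (h01 i)).neg.congr
      (ae_of_all μ fun ω => by simp)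
  refine (HasSubgaussianMGF.measure_sum_range_ge_le_of_iIndepFun (n := m) hind'
    (fun i _ => hsub i) hs).trans_eq ?_
  push_cast
  ring_nf

variable {D : ℝ} {m : ℕ} (hD : |∑ i ∈ range m, (2 * μ[ξ i] - 1)| ≤ D)
include hD

lemma measureReal_sub_lt_sum_range_le {ε n : ℝ} (hε : 0 < ε) (hεn : 2 * (D + 1) ≤ ε * n)
    (hm_ge : (2 + ε) * n - 1 ≤ m) (hm_le : (m : ℝ) ≤ (2 + ε) * n) :
    μ.real {ω | (m : ℝ) - n < ∑ i ∈ range m, ξ i ω}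
      ≤ Real.exp (-(1 / 8) * ε ^ 2 * n / (2 + ε)) := by
  obtain ⟨-, hDu⟩ := abs_le.mp (sum_range_two_mul_sub_one (μ[ξ ·]) m ▸ hD)
  have hD0 : 0 ≤ D := (abs_nonneg _).trans hD
  have hn : 0 < n := pos_of_mul_pos_right (by linarith) hε.le
  calc μ.real {ω | (m : ℝ) - n < ∑ i ∈ range m, ξ i ω}
      ≤ μ.real {ω | ε * n / 4 ≤ ∑ i ∈ range m, (ξ i ω - μ[ξ i])} := by
        refine measureReal_mono fun ω hω => ?_
        simp only [Set.mem_ofPred_eq, sum_sub_distrib] at hω ⊢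
        linarith
    _ ≤ Real.exp (-2 * (ε * n / 4) ^ 2 / m) :=
        measureReal_le_sum_range_sub_integral_le hind hmeas h01 m (by positivity)
    _ ≤ Real.exp (-(1 / 8) * ε ^ 2 * n / (2 + ε)) :=
        Real.exp_le_exp.mpr (neg_two_mul_sq_div_le hε hn (by linarith) hm_le)

lemma measureReal_sum_range_le_sub_le {ε n : ℝ} (hε : 0 < ε) (hε1 : ε < 1)
    (hεn : 2 * (D + 1) ≤ ε * n) (hm_ge : (2 - ε) * n ≤ m) (hm_le : (m : ℝ) ≤ (2 - ε) * n + 1) :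
    μ.real {ω | ∑ i ∈ range m, ξ i ω ≤ (m : ℝ) - n}
      ≤ Real.exp (-(1 / 8) * ε ^ 2 * n / (2 + ε)) := by
  obtain ⟨hDl, -⟩ := abs_le.mp (sum_range_two_mul_sub_one (μ[ξ ·]) m ▸ hD)
  have hD0 : 0 ≤ D := (abs_nonneg _).trans hD
  have hn : 0 < n := pos_of_mul_pos_right (by linarith) hε.le
  calc μ.real {ω | ∑ i ∈ range m, ξ i ω ≤ (m : ℝ) - n}
      ≤ μ.real {ω | ε * n / 4 ≤ ∑ i ∈ range m, (μ[ξ i] - ξ i ω)} := by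
        refine measureReal_mono fun ω hω => ?_
        simp only [Set.mem_ofPred_eq, sum_sub_distrib] at hω ⊢
        linarith
    _ ≤ Real.exp (-2 * (ε * n / 4) ^ 2 / m) :=
        measureReal_le_sum_range_integral_sub_le hind hmeas h01 m (by positivity)
    _ ≤ Real.exp (-(1 / 8) * ε ^ 2 * n / (2 + ε)) :=
        Real.exp_le_exp.mpr (neg_two_mul_sq_div_le hε hn (by nlinarith) (by nlinarith))

end Hoeffding

theorem concentration_FBLP_general
    {Ω : Type*} [MeasurableSpace Ω] (μ : Measure Ω) [IsProbabilityMeasure μ]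
    (p : ℕ → ℝ)
    (ξ : ℕ → Ω → ℝ) (hmeas : ∀ i, Measurable (ξ i))
    (hval : ∀ i ω, ξ i ω = 0 ∨ ξ i ω = 1)
    (hind : iIndepFun ξ μ)
    (hmean : ∀ i, ∫ ω, ξ i ω ∂μ = p i)
    (D : ℝ) (hD : ∀ k : ℕ, |∑ i ∈ Finset.range k, (2 * p i - 1)| ≤ D)
    (T : ℕ → Ω → ℕ)
    (hT : ∀ n ω, T n ω = sInf {k : ℕ | ∑ i ∈ Finset.range k, (1 - ξ i ω) = (n:ℝ)}) :
    ∃ C : ℝ, 0 < C ∧ ∀ ε : ℝ, 0 < ε → ∀ᶠ n : ℕ in atTop,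
      (μ {ω | ε < |(∑ k ∈ Finset.range (T n ω), ξ k ω) / n - 1|}).toReal ≤
        2 * Real.exp (-C * ε^2 * n / (2 + ε)) := by
  refine ⟨1 / 8, by norm_num, fun ε hε => ?_⟩
  simp_rw [← hmean] at hD
  have h01 (i : ℕ) (ω : Ω) : ξ i ω ∈ Set.Icc 0 1 := by rcases hval i ω with h | h <;> simp [h]
  have hD0 : 0 ≤ D := (abs_nonneg _).trans (hD 0)
  filter_upwards [tendsto_natCast_atTop_atTop.eventually_ge_atTop (2 * (D + 1) / ε)] with n hn
  have hεn : 2 * (D + 1) ≤ ε * n := by rw [div_le_iff₀ hε] at hn; linarith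
  have hn0 : 0 < n := Nat.cast_pos.mp (pos_of_mul_pos_right (by linarith) hε.le : (0 : ℝ) < n)
  set m₁ := ⌊(2 + ε) * (n : ℝ)⌋₊
  set m₂ := ⌈(2 - ε) * (n : ℝ)⌉₊
  have hlower : μ.real {ω | ε < 1 ∧ ∑ i ∈ range m₂, ξ i ω ≤ (m₂ : ℝ) - n}
      ≤ Real.exp (-(1 / 8) * ε ^ 2 * n / (2 + ε)) := by
    by_cases hε1 : ε < 1
    · simpa only [hε1, true_and] using measureReal_sum_range_le_sub_le hind hmeas h01 (hD m₂)
        hε hε1 hεn (Nat.le_ceil _) (Nat.ceil_lt_add_one (by nlinarith)).le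
    · simp [hε1, Real.exp_nonneg]
  simp only [hT, ← measureReal_def]
  calc _ ≤ μ.real ({ω | (m₁ : ℝ) - n < ∑ i ∈ range m₁, ξ i ω}
          ∪ {ω | ε < 1 ∧ ∑ i ∈ range m₂, ξ i ω ≤ (m₂ : ℝ) - n}) :=
        measureReal_mono fun ω =>
          sub_lt_sum_range_or_sum_range_le_sub_of_lt_abs (hval · ω) hn0
            (Nat.floor_le (by positivity)) (Nat.le_ceil _)
    _ ≤ _ := (measureReal_union_le _ _).trans (add_le_add
        (measureReal_sub_lt_sum_range_le hind hmeas h01 (hD m₁) hε hεn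
          (by linarith [Nat.lt_floor_add_one ((2 + ε) * (n : ℝ))]) (Nat.floor_le (by positivity)))
        hlower)
    _ = _ := by ring

theorem concentration_FBLP
    {Ω : Type*} [MeasurableSpace Ω] (μ : Measure Ω) [IsProbabilityMeasure μ]
    (p : ℕ → ℝ) (hp : ∀ i, p i ∈ Set.Ioo (0:ℝ) 1)
    (ξ : ℕ → Ω → ℝ) (hmeas : ∀ i, Measurable (ξ i))
    (hval : ∀ i ω, ξ i ω = 0 ∨ ξ i ω = 1)
    (hind : iIndepFun ξ μ)
    (hmean : ∀ i, ∫ ω, ξ i ω ∂μ = p i)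
    (D : ℝ) (hD : ∀ k : ℕ, |∑ i ∈ Finset.range k, (2 * p i - 1)| ≤ D)
    (T : ℕ → Ω → ℕ)
    (hT : ∀ n ω, T n ω = sInf {k : ℕ | ∑ i ∈ Finset.range k, (1 - ξ i ω) = (n:ℝ)}) :
    ∃ C : ℝ, 0 < C ∧ ∀ ε : ℝ, 0 < ε → ∀ᶠ n : ℕ in atTop,
      (μ {ω | ε < |(∑ k ∈ Finset.range (T n ω), ξ k ω) / n - 1|}).toReal ≤
        2 * Real.exp (-C * ε^2 * n / (2 + ε)) :=
  concentration_FBLP_general μ p ξ hmeas hval hind hmean D hD T hT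
end

section
/- Let (ξ_i) be independent Bernoulli(p_i) with δ_k = Σ_{i=1}^k (2p_i - 1) uniformly bounded, T_n the trial of the n-th failure among the ξ_i. Then there is a constant C > 0 such that for all ε > 0 and sufficiently large n, P(|T_n/n - 2| > ε) ≤ 2 exp(-C ε² n / (2 + ε)). -/
open MeasureTheory ProbabilityTheory Finset Filter

open scoped NNReal

/-!
The number of failures among the first `k` trials has mean `(k - δ_k) / 2`, within `D / 2` of
`k / 2`, and moves in unit steps. So `T_n > (2 + ε) n` means fewer than `n` failures among the
first `⌊(2 + ε) n⌋` trials, and `T_n < (2 - ε) n` means at least `n` failures among the first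
`⌊(2 - ε) n⌋`: in both cases the failure count deviates from its mean by about `ε n / 2` at a
fixed time `k ≤ (2 + ε) n`, which Hoeffding's inequality bounds by `exp (-ε² n / (8 (2 + ε)))`.
-/

section FirstPassage

variable {f : ℕ → ℕ}

lemma exists_le_apply_eq_of_le_apply (hstep : ∀ k, f (k + 1) ≤ f k + 1) {n m : ℕ}
    (h0 : f 0 ≤ n) (hm : n ≤ f m) : ∃ k ≤ m, f k = n := by
  induction m with
  | zero => exact ⟨0, le_rfl, (le_antisymm hm h0).symm⟩
  | succ m ih =>
    by_cases hn : n ≤ f m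
    · obtain ⟨k, hkm, hk⟩ := ih hn
      exact ⟨k, hkm.trans m.le_succ, hk⟩
    · exact ⟨m + 1, le_rfl, by have := hstep m; omega⟩

lemma le_apply_iff_sInf_le (hmono : Monotone f) (hstep : ∀ k, f (k + 1) ≤ f k + 1)
    {n m : ℕ} (h0 : f 0 ≤ n) :
    n ≤ f m ↔ (∃ k, f k = n) ∧ sInf {k | f k = n} ≤ m := by
  constructor
  · intro hm
    obtain ⟨k, hkm, hk⟩ := exists_le_apply_eq_of_le_apply hstep h0 hm
    exact ⟨⟨k, hk⟩, (Nat.sInf_le (show k ∈ {k | f k = n} from hk)).trans hkm⟩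
  · rintro ⟨hne, hle⟩
    exact (Nat.sInf_mem hne).symm.le.trans (hmono hle)

end FirstPassage

section FailureTime

/-- The trial `T_n` of the `n`-th failure (`x i = 0`); junk value `0` if there is none. -/
noncomputable def failureTime (x : ℕ → ℝ) (n : ℕ) : ℕ :=
  sInf {k : ℕ | ∑ i ∈ range k, (1 - x i) = n}

variable {x : ℕ → ℝ}

lemma sum_range_one_sub_eq_count (hx : ∀ i, x i = 0 ∨ x i = 1) (k : ℕ) :
    ∑ i ∈ range k, (1 - x i) = Nat.count (fun i ↦ x i = 0) k := by
  rw [Nat.count_eq_card_filter_range, ← sum_boole]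
  refine sum_congr rfl fun i _ ↦ ?_
  rcases hx i with h | h <;> simp [h]

lemma le_sum_range_one_sub_iff (hx : ∀ i, x i = 0 ∨ x i = 1) (n m : ℕ) :
    (n : ℝ) ≤ ∑ i ∈ range m, (1 - x i) ↔
      (∃ k, ∑ i ∈ range k, (1 - x i) = n) ∧ failureTime x n ≤ m := by
  simp only [failureTime, sum_range_one_sub_eq_count hx, Nat.cast_le, Nat.cast_inj]
  refine le_apply_iff_sInf_le (Nat.count_monotone _) (fun k ↦ ?_) (by simp)
  rw [Nat.count_succ]
  split_ifs <;> omega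

lemma abs_two_mul_sum_range_one_sub_sub_le {p : ℕ → ℝ} {D : ℝ}
    (hD : ∀ k : ℕ, |∑ i ∈ range k, (2 * p i - 1)| ≤ D) (k : ℕ) :
    |2 * ∑ i ∈ range k, (1 - p i) - k| ≤ D := by
  convert hD k using 1
  rw [← abs_neg]
  simp only [sum_sub_distrib, ← mul_sum, sum_const, card_range, nsmul_eq_mul, mul_one]
  ring_nf

lemma le_sum_range_sub_or_le_sum_range_sub_of_lt_abs (hx : ∀ i, x i = 0 ∨ x i = 1)
    {p : ℕ → ℝ} {D : ℝ} (hD : ∀ k : ℕ, |∑ i ∈ range k, (2 * p i - 1)| ≤ D) {n : ℕ} (hn : 0 < n)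
    {ε : ℝ} (hε : 0 < ε) (hεn : 2 * (1 + D) ≤ ε * n) (h : ε < |(failureTime x n : ℝ) / n - 2|) :
    ε * n / 4 ≤ ∑ i ∈ range ⌊(2 + ε) * n⌋₊, (x i - p i) ∨
      ε * n / 4 ≤ ∑ i ∈ range ⌊(2 - ε) * n⌋₊, (p i - x i) := by
  have hn' : (0 : ℝ) < n := by exact_mod_cast hn
  have hsum_sub : ∀ (y z : ℕ → ℝ) k, ∑ i ∈ range k, (y i - z i)
      = ∑ i ∈ range k, (1 - z i) - ∑ i ∈ range k, (1 - y i) := fun y z k ↦ by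
    rw [← sum_sub_distrib]
    exact sum_congr rfl fun i _ ↦ by ring
  set m := ⌊(2 + ε) * n⌋₊
  set m' := ⌊(2 - ε) * n⌋₊
  rcases lt_or_ge (∑ i ∈ range m, (1 - x i)) n with hup | hup
  · have hm : (2 + ε) * n - 1 < m := Nat.sub_one_lt_floor _
    have := abs_le.1 (abs_two_mul_sum_range_one_sub_sub_le hD m)
    left
    rw [hsum_sub]
    linarith
  obtain ⟨hne, hτ⟩ := (le_sum_range_one_sub_iff hx n m).1 hup
  have hτ_le : (failureTime x n : ℝ) / n ≤ 2 + ε := by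
    rw [div_le_iff₀ hn']
    exact (Nat.le_floor_iff (by positivity)).1 hτ
  have hτ_lt : (failureTime x n : ℝ) < (2 - ε) * n := by
    rw [← div_lt_iff₀ hn']
    rcases lt_abs.1 h with h | h <;> linarith
  have hm' : (m' : ℝ) ≤ (2 - ε) * n := Nat.floor_le ((Nat.cast_nonneg _).trans hτ_lt.le)
  have hlow := (le_sum_range_one_sub_iff hx n m').2 ⟨hne, Nat.le_floor hτ_lt.le⟩
  have := abs_le.1 (abs_two_mul_sum_range_one_sub_sub_le hD m')
  right
  rw [hsum_sub]
  linarith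

end FailureTime

section Hoeffding

variable {Ω : Type*} [MeasurableSpace Ω] {μ : Measure Ω}

lemma measureReal_sum_range_ge_le_of_le {Y : ℕ → Ω → ℝ} (hind : iIndepFun Y μ) {c : ℝ≥0}
    (hc : 0 < c) (hY : ∀ i, HasSubgaussianMGF (Y i) c μ) {k : ℕ} {a M : ℝ} (ha : 0 < a)
    (hkM : (k : ℝ) ≤ M) :
    μ.real {ω | a ≤ ∑ i ∈ range k, Y i ω} ≤ Real.exp (-a ^ 2 / (2 * M * c)) := by
  rcases k.eq_zero_or_pos with rfl | hk
  · simp [not_le.2 ha, Real.exp_nonneg]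
  calc μ.real {ω | a ≤ ∑ i ∈ range k, Y i ω}
      ≤ Real.exp (-a ^ 2 / (2 * k * c)) :=
        HasSubgaussianMGF.measure_sum_range_ge_le_of_iIndepFun hind (fun i _ ↦ hY i) ha.le
    _ ≤ Real.exp (-a ^ 2 / (2 * M * c)) := by
        rw [Real.exp_le_exp, neg_div, neg_div, neg_le_neg_iff]
        gcongr

lemma hasSubgaussianMGF_sub_integral_of_mem_Icc_zero_one [IsProbabilityMeasure μ] {X : Ω → ℝ}
    (hm : AEMeasurable X μ) (hX : ∀ᵐ ω ∂μ, X ω ∈ Set.Icc 0 1) :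
    HasSubgaussianMGF (fun ω ↦ X ω - μ[X]) (1 / 4) μ := by
  convert hasSubgaussianMGF_of_mem_Icc hm hX
  norm_num

lemma measureReal_sum_range_sub_integral_ge_le [IsProbabilityMeasure μ] {X : ℕ → Ω → ℝ}
    (hind : iIndepFun X μ) (hm : ∀ i, AEMeasurable (X i) μ)
    (hX : ∀ i, ∀ᵐ ω ∂μ, X i ω ∈ Set.Icc 0 1) {k : ℕ} {a M : ℝ} (ha : 0 < a)
    (hkM : (k : ℝ) ≤ M) :
    μ.real {ω | a ≤ ∑ i ∈ range k, (X i ω - μ[X i])} ≤ Real.exp (-2 * a ^ 2 / M) ∧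
      μ.real {ω | a ≤ ∑ i ∈ range k, (μ[X i] - X i ω)} ≤ Real.exp (-2 * a ^ 2 / M) := by
  have hsubG i := hasSubgaussianMGF_sub_integral_of_mem_Icc_zero_one (hm i) (hX i)
  have hexp : Real.exp (-a ^ 2 / (2 * M * (1 / 4 : ℝ≥0))) = Real.exp (-2 * a ^ 2 / M) := by
    congr 1
    push_cast
    ring
  rw [← hexp]
  refine ⟨measureReal_sum_range_ge_le_of_le ?_ (by norm_num) hsubG ha hkM,
    measureReal_sum_range_ge_le_of_le ?_ (by norm_num) (fun i ↦ ?_) ha hkM⟩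
  · exact hind.comp _ fun i ↦ measurable_id.sub_const _
  · exact hind.comp _ fun i ↦ measurable_const.sub measurable_id
  · simpa [Pi.neg_def] using (hsubG i).neg

end Hoeffding

theorem concentration_Tn_general
    {Ω : Type*} [MeasurableSpace Ω] (μ : Measure Ω) [IsProbabilityMeasure μ]
    (p : ℕ → ℝ)
    (ξ : ℕ → Ω → ℝ) (hmeas : ∀ i, Measurable (ξ i))
    (hval : ∀ i ω, ξ i ω = 0 ∨ ξ i ω = 1)
    (hind : iIndepFun ξ μ)
    (hmean : ∀ i, ∫ ω, ξ i ω ∂μ = p i)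
    (D : ℝ) (hD : ∀ k : ℕ, |∑ i ∈ Finset.range k, (2 * p i - 1)| ≤ D)
    (T : ℕ → Ω → ℕ)
    (hT : ∀ n ω, T n ω = sInf {k : ℕ | ∑ i ∈ Finset.range k, (1 - ξ i ω) = (n:ℝ)}) :
    ∃ C : ℝ, 0 < C ∧ ∀ ε : ℝ, 0 < ε → ∀ᶠ n : ℕ in atTop,
      (μ {ω | ε < |(T n ω : ℝ) / n - 2|}).toReal ≤
        2 * Real.exp (-C * ε^2 * n / (2 + ε)) := by
  have hξ01 i : ∀ᵐ ω ∂μ, ξ i ω ∈ Set.Icc 0 1 :=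
    ae_of_all _ fun ω ↦ by rcases hval i ω with h | h <;> simp [h]
  refine ⟨1 / 8, by norm_num, fun ε hε ↦ ?_⟩
  filter_upwards [eventually_gt_atTop 0,
    (tendsto_natCast_atTop_atTop.const_mul_atTop hε).eventually_ge_atTop (2 * (1 + D))]
    with n hn hεn
  have hn' : (0 : ℝ) < n := by exact_mod_cast hn
  have hm : (⌊(2 + ε) * n⌋₊ : ℝ) ≤ (2 + ε) * n := Nat.floor_le (by positivity)
  have hm' : (⌊(2 - ε) * n⌋₊ : ℝ) ≤ (2 + ε) * n :=
    (Nat.cast_le.2 (Nat.floor_le_floor (by gcongr; linarith))).trans hm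
  have hsub : {ω | ε < |(T n ω : ℝ) / n - 2|} ⊆
      {ω | ε * n / 4 ≤ ∑ i ∈ range ⌊(2 + ε) * n⌋₊, (ξ i ω - p i)} ∪
        {ω | ε * n / 4 ≤ ∑ i ∈ range ⌊(2 - ε) * n⌋₊, (p i - ξ i ω)} := fun ω hω ↦
    le_sum_range_sub_or_le_sum_range_sub_of_lt_abs (hval · ω) hD hn hε hεn
      (by rw [failureTime, ← hT]; exact hω)
  have hexp : Real.exp (-2 * (ε * n / 4) ^ 2 / ((2 + ε) * n))
      = Real.exp (-(1 / 8) * ε ^ 2 * n / (2 + ε)) := by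
    congr 1
    field_simp
    ring
  have hup := (measureReal_sum_range_sub_integral_ge_le hind (fun i ↦ (hmeas i).aemeasurable)
    hξ01 (a := ε * n / 4) (by positivity) hm).1
  have hlow := (measureReal_sum_range_sub_integral_ge_le hind (fun i ↦ (hmeas i).aemeasurable)
    hξ01 (a := ε * n / 4) (by positivity) hm').2
  simp only [hmean, hexp] at hup hlow
  calc μ.real {ω | ε < |(T n ω : ℝ) / n - 2|}
      ≤ μ.real {ω | ε * n / 4 ≤ ∑ i ∈ range ⌊(2 + ε) * n⌋₊, (ξ i ω - p i)} +
          μ.real {ω | ε * n / 4 ≤ ∑ i ∈ range ⌊(2 - ε) * n⌋₊, (p i - ξ i ω)} :=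
        (measureReal_mono hsub).trans (measureReal_union_le _ _)
    _ ≤ 2 * Real.exp (-(1 / 8) * ε ^ 2 * n / (2 + ε)) := by linarith

theorem concentration_Tn
    {Ω : Type*} [MeasurableSpace Ω] (μ : Measure Ω) [IsProbabilityMeasure μ]
    (p : ℕ → ℝ) (hp : ∀ i, p i ∈ Set.Ioo (0:ℝ) 1)
    (ξ : ℕ → Ω → ℝ) (hmeas : ∀ i, Measurable (ξ i))
    (hval : ∀ i ω, ξ i ω = 0 ∨ ξ i ω = 1)
    (hind : iIndepFun ξ μ)
    (hmean : ∀ i, ∫ ω, ξ i ω ∂μ = p i)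
    (D : ℝ) (hD : ∀ k : ℕ, |∑ i ∈ Finset.range k, (2 * p i - 1)| ≤ D)
    (T : ℕ → Ω → ℕ)
    (hT : ∀ n ω, T n ω = sInf {k : ℕ | ∑ i ∈ Finset.range k, (1 - ξ i ω) = (n:ℝ)}) :
    ∃ C : ℝ, 0 < C ∧ ∀ ε : ℝ, 0 < ε → ∀ᶠ n : ℕ in atTop,
      (μ {ω | ε < |(T n ω : ℝ) / n - 2|}).toReal ≤
        2 * Real.exp (-C * ε^2 * n / (2 + ε)) :=
  concentration_Tn_general μ p ξ hmeas hval hind hmean D hD T hT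
end

section
/- Suppose Σ_{j=1}^∞ (2p_j - 1) converges to δ and δ_k denotes its partial sums. Let T_n be as above (time of n-th failure, T_n ≥ n always). Then ρ(n) := E[Z_1 - n] = E[δ_{T_n}] converges to δ as n → ∞. -/
open MeasureTheory ProbabilityTheory Finset Filter
open scoped ENNReal

/-!
The time `T n` of the `n`-th failure is a stopping time: `{k < T n}` only depends on
`ξ 0, …, ξ (k - 1)`, hence is independent of `ξ k`. Wald's identity therefore gives
`E[∑_{i < T n} ξ i] = E[∑_{i < T n} p i]`, and since the first `T n` trials contain exactly `n`
failures both sides of the first claim equal `E[T n] - 2n`. As `T n ≥ n`, the bounded convergent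
sequence `δ_k` evaluated at `T n` converges in mean by dominated convergence.
-/

theorem Nat.lt_sInf_iff_forall_le_notMem {s : Set ℕ} (hs : s.Nonempty) (k : ℕ) :
    k < sInf s ↔ ∀ m ≤ k, m ∉ s := by
  classical
  rw [Nat.sInf_def hs]
  exact Nat.lt_find_iff hs k

theorem sum_range_eq_sub_of_sum_range_one_sub_eq {x : ℕ → ℝ} {k : ℕ} {a : ℝ}
    (h : ∑ i ∈ range k, (1 - x i) = a) : ∑ i ∈ range k, x i = k - a := by
  rw [sum_sub_distrib] at h
  simp only [sum_const, card_range, nsmul_eq_mul, mul_one] at h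
  linarith

section StoppedSums

variable {Ω : Type*} {mΩ : MeasurableSpace Ω} {μ : Measure Ω}

theorem lintegral_sum_range_eq_tsum_setLIntegral {f : ℕ → Ω → ℝ≥0∞}
    (hf : ∀ i, Measurable (f i)) {τ : Ω → ℕ} {A : ℕ → Set Ω} (hA : ∀ i, MeasurableSet (A i))
    (hτA : ∀ᵐ ω ∂μ, ∀ i, i < τ ω ↔ ω ∈ A i) :
    ∫⁻ ω, ∑ i ∈ range (τ ω), f i ω ∂μ = ∑' i, ∫⁻ ω in A i, f i ω ∂μ := by
  have hsum : ∀ᵐ ω ∂μ, ∑ i ∈ range (τ ω), f i ω = ∑' i, (A i).indicator (f i) ω := by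
    filter_upwards [hτA] with ω hω
    rw [tsum_eq_sum fun i hi => Set.indicator_of_notMem (by rwa [← hω, ← mem_range]) _]
    exact sum_congr rfl fun i hi => (Set.indicator_of_mem ((hω i).1 (mem_range.1 hi)) _).symm
  rw [lintegral_congr_ae hsum, lintegral_tsum fun i => ((hf i).indicator (hA i)).aemeasurable]
  exact tsum_congr fun i => lintegral_indicator (hA i) _

/-- Wald's identity. -/
theorem lintegral_sum_range_eq_lintegral_sum_range_lintegral {m : ℕ → MeasurableSpace Ω}
    (hm : ∀ i, m i ≤ mΩ) (hind : iIndep m μ) {X : ℕ → Ω → ℝ≥0∞}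
    (hX : ∀ i, Measurable[m i] (X i)) {τ : Ω → ℕ} {A : ℕ → Set Ω}
    (hA : ∀ i, MeasurableSet[⨆ j ∈ Set.Iio i, m j] (A i))
    (hτA : ∀ᵐ ω ∂μ, ∀ i, i < τ ω ↔ ω ∈ A i) :
    ∫⁻ ω, ∑ i ∈ range (τ ω), X i ω ∂μ = ∫⁻ ω, ∑ i ∈ range (τ ω), ∫⁻ ω', X i ω' ∂μ ∂μ := by
  have hpast : ∀ i, (⨆ j ∈ Set.Iio i, m j) ≤ mΩ := fun i => iSup₂_le fun j _ => hm j
  rw [lintegral_sum_range_eq_tsum_setLIntegral (fun i => (hX i).mono (hm i) le_rfl)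
      (fun i => hpast i _ (hA i)) hτA,
    lintegral_sum_range_eq_tsum_setLIntegral (fun _ => measurable_const)
      (fun i => hpast i _ (hA i)) hτA]
  refine tsum_congr fun i => ?_
  have hindep : Indep (⨆ j ∈ Set.Iio i, m j) (m i) μ := by
    simpa using indep_iSup_of_disjoint hm hind (S := Set.Iio i) (T := {i}) (by simp)
  have hindicator : Measurable[⨆ j ∈ Set.Iio i, m j] ((A i).indicator (1 : Ω → ℝ≥0∞)) :=
    measurable_const.indicator (hA i)
  rw [setLIntegral_const, ← lintegral_indicator (hpast i _ (hA i)), mul_comm,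
    ← lintegral_indicator_one (hpast i _ (hA i)),
    ← lintegral_mul_eq_lintegral_mul_lintegral_of_independent_measurableSpace (hpast i) (hm i)
      hindep hindicator (hX i)]
  congr with ω
  by_cases h : ω ∈ A i <;> simp [h]

theorem integral_sum_range_eq_integral_sum_range_integral {ξ : ℕ → Ω → ℝ}
    (hmeas : ∀ i, Measurable (ξ i)) (hnonneg : ∀ i ω, 0 ≤ ξ i ω) (hind : iIndepFun ξ μ)
    (hint : ∀ i, Integrable (ξ i) μ) {τ : Ω → ℕ} {A : ℕ → Set Ω}
    (hA : ∀ i, MeasurableSet[⨆ j ∈ Set.Iio i, MeasurableSpace.comap (ξ j) inferInstance] (A i))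
    (hτA : ∀ᵐ ω ∂μ, ∀ i, i < τ ω ↔ ω ∈ A i)
    (hSint : Integrable (fun ω => ∑ i ∈ range (τ ω), ξ i ω) μ)
    (hMint : Integrable (fun ω => ∑ i ∈ range (τ ω), ∫ ω', ξ i ω' ∂μ) μ) :
    ∫ ω, ∑ i ∈ range (τ ω), ξ i ω ∂μ = ∫ ω, ∑ i ∈ range (τ ω), ∫ ω', ξ i ω' ∂μ ∂μ := by
  have hmean_nonneg : ∀ i, 0 ≤ ∫ ω, ξ i ω ∂μ := fun i => integral_nonneg (hnonneg i)
  rw [← ENNReal.ofReal_eq_ofReal_iff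
      (integral_nonneg fun ω => sum_nonneg fun i _ => hnonneg i ω)
      (integral_nonneg fun ω => sum_nonneg fun i _ => hmean_nonneg i),
    ofReal_integral_eq_lintegral_ofReal hSint
      (ae_of_all _ fun ω => sum_nonneg fun i _ => hnonneg i ω),
    ofReal_integral_eq_lintegral_ofReal hMint
      (ae_of_all _ fun ω => sum_nonneg fun i _ => hmean_nonneg i)]
  simp only [ENNReal.ofReal_sum_of_nonneg fun i _ => hnonneg i _,
    ENNReal.ofReal_sum_of_nonneg fun i _ => hmean_nonneg i,
    ofReal_integral_eq_lintegral_ofReal (hint _) (ae_of_all _ (hnonneg _))]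
  exact lintegral_sum_range_eq_lintegral_sum_range_lintegral (fun i => (hmeas i).comap_le)
    hind.iIndep (fun i => ENNReal.measurable_ofReal.comp (comap_measurable (ξ i))) hA hτA

theorem tendsto_integral_comp_of_tendsto_atTop [IsProbabilityMeasure μ] {E : Type*}
    [NormedAddCommGroup E] [NormedSpace ℝ E] [CompleteSpace E] {f : ℕ → E} {L : E}
    (hf : Tendsto f atTop (nhds L)) {τ : ℕ → Ω → ℕ} (hτ : ∀ n, AEMeasurable (τ n) μ)
    (hτ_lim : ∀ᵐ ω ∂μ, Tendsto (fun n => τ n ω) atTop atTop) :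
    Tendsto (fun n => ∫ ω, f (τ n ω) ∂μ) atTop (nhds L) := by
  obtain ⟨C, hC⟩ := hf.norm.bddAbove_range
  have hL : ∫ _, L ∂μ = L := by simp
  rw [← hL]
  exact tendsto_integral_of_dominated_convergence (fun _ => C)
    (fun n => StronglyMeasurable.of_discrete.aestronglyMeasurable.comp_aemeasurable (hτ n))
    (integrable_const C) (fun n => ae_of_all _ fun ω => hC ⟨τ n ω, rfl⟩)
    (hτ_lim.mono fun ω hω => hf.comp hω)

theorem integrable_sum_range_comp {E : Type*} [NormedAddCommGroup E] {c : ℕ → E}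
    (hc : ∀ i, ‖c i‖ ≤ 1) {τ : Ω → ℕ} (hτ : AEMeasurable τ μ)
    (hτint : Integrable (fun ω => (τ ω : ℝ)) μ) :
    Integrable (fun ω => ∑ i ∈ range (τ ω), c i) μ :=
  hτint.mono' ((StronglyMeasurable.of_discrete (f := fun k => ∑ i ∈ range k, c i)
      ).aestronglyMeasurable.comp_aemeasurable hτ)
    (ae_of_all _ fun ω => (norm_sum_le _ _).trans
      (by simpa using sum_le_card_nsmul (range (τ ω)) _ 1 fun i _ => hc i))

end StoppedSums

theorem measurableSet_forall_le_sum_range_one_sub_ne {Ω : Type*} (ξ : ℕ → Ω → ℝ) (a : ℝ)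
    (k : ℕ) :
    MeasurableSet[⨆ j ∈ Set.Iio k, MeasurableSpace.comap (ξ j) inferInstance]
      {ω | ∀ m ≤ k, ∑ i ∈ range m, (1 - ξ i ω) ≠ a} := by
  simp only [Set.ofPred_forall]
  refine MeasurableSet.iInter fun m => MeasurableSet.iInter fun hm => ?_
  refine (measurableSet_singleton a).compl.preimage (Finset.measurable_sum _ fun i hi => ?_)
  exact ((comap_measurable (ξ i)).mono
    (le_iSup₂ (f := fun j (_ : j ∈ Set.Iio k) => MeasurableSpace.comap (ξ j) inferInstance) i
      (by simp at hi ⊢; omega)) le_rfl).const_sub 1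

section HittingTime

variable {Ω : Type*} [MeasurableSpace Ω] {μ : Measure Ω} {ξ : ℕ → Ω → ℝ} {n : ℕ} {τ : Ω → ℕ}

theorem ae_sum_range_eq_sub_of_eq_sInf
    (hτ : ∀ ω, τ ω = sInf {k : ℕ | ∑ i ∈ range k, (1 - ξ i ω) = (n : ℝ)})
    (hfin : ∀ᵐ ω ∂μ, ∃ k : ℕ, ∑ i ∈ range k, (1 - ξ i ω) = (n : ℝ)) :
    (fun ω => ∑ i ∈ range (τ ω), ξ i ω) =ᵐ[μ] fun ω => (τ ω : ℝ) - n := by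
  filter_upwards [hfin] with ω hω
  refine sum_range_eq_sub_of_sum_range_one_sub_eq ?_
  rw [hτ]
  exact Nat.sInf_mem hω

theorem ae_le_of_eq_sInf (hξ : ∀ i ω, 0 ≤ ξ i ω)
    (hτ : ∀ ω, τ ω = sInf {k : ℕ | ∑ i ∈ range k, (1 - ξ i ω) = (n : ℝ)})
    (hfin : ∀ᵐ ω ∂μ, ∃ k : ℕ, ∑ i ∈ range k, (1 - ξ i ω) = (n : ℝ)) :
    ∀ᵐ ω ∂μ, n ≤ τ ω := by
  filter_upwards [ae_sum_range_eq_sub_of_eq_sInf hτ hfin] with ω hω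
  exact_mod_cast sub_nonneg.1 (hω ▸ sum_nonneg fun i _ => hξ i ω)

theorem ae_lt_iff_of_eq_sInf
    (hτ : ∀ ω, τ ω = sInf {k : ℕ | ∑ i ∈ range k, (1 - ξ i ω) = (n : ℝ)})
    (hfin : ∀ᵐ ω ∂μ, ∃ k : ℕ, ∑ i ∈ range k, (1 - ξ i ω) = (n : ℝ)) :
    ∀ᵐ ω ∂μ, ∀ k, k < τ ω ↔ ∀ m ≤ k, ∑ i ∈ range m, (1 - ξ i ω) ≠ n := by
  filter_upwards [hfin] with ω hω k
  rw [hτ]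
  exact Nat.lt_sInf_iff_forall_le_notMem hω k

theorem integral_sum_range_sub_eq_integral_sum_range_two_mul_integral_sub_one
    [IsProbabilityMeasure μ] (hmeas : ∀ i, Measurable (ξ i)) (hξ : ∀ i ω, ξ i ω ∈ Set.Icc 0 1)
    (hind : iIndepFun ξ μ) (hτmeas : Measurable τ)
    (hτ : ∀ ω, τ ω = sInf {k : ℕ | ∑ i ∈ range k, (1 - ξ i ω) = (n : ℝ)})
    (hfin : ∀ᵐ ω ∂μ, ∃ k : ℕ, ∑ i ∈ range k, (1 - ξ i ω) = (n : ℝ))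
    (hτint : Integrable (fun ω => (τ ω : ℝ)) μ) :
    ∫ ω, ((∑ i ∈ range (τ ω), ξ i ω) - n) ∂μ =
      ∫ ω, ∑ i ∈ range (τ ω), (2 * ∫ ω', ξ i ω' ∂μ - 1) ∂μ := by
  have hξ_norm : ∀ i ω, ‖ξ i ω‖ ≤ 1 := fun i ω => by
    rw [Real.norm_of_nonneg (hξ i ω).1]
    exact (hξ i ω).2
  have hξ_int : ∀ i, Integrable (ξ i) μ := fun i =>
    .of_bound (hmeas i).aestronglyMeasurable 1 (ae_of_all _ (hξ_norm i))
  have hmean_norm : ∀ i, ‖∫ ω, ξ i ω ∂μ‖ ≤ 1 := fun i => by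
    simpa using norm_integral_le_of_norm_le_const (μ := μ) (ae_of_all _ (hξ_norm i))
  have hsucc := ae_sum_range_eq_sub_of_eq_sInf hτ hfin
  have hS_int : Integrable (fun ω => ∑ i ∈ range (τ ω), ξ i ω) μ :=
    (hτint.sub (integrable_const _)).congr hsucc.symm
  have hM_int := integrable_sum_range_comp hmean_norm hτmeas.aemeasurable hτint
  have hwald := integral_sum_range_eq_integral_sum_range_integral hmeas (fun i ω => (hξ i ω).1)
    hind hξ_int (measurableSet_forall_le_sum_range_one_sub_ne ξ n) (ae_lt_iff_of_eq_sInf hτ hfin)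
    hS_int hM_int
  have hS : ∫ ω, ∑ i ∈ range (τ ω), ξ i ω ∂μ = ∫ ω, (τ ω : ℝ) ∂μ - n := by
    rw [integral_congr_ae hsucc, integral_sub hτint (integrable_const _)]
    simp
  have hsplit : (fun ω => ∑ i ∈ range (τ ω), (2 * ∫ ω', ξ i ω' ∂μ - 1))
      = fun ω => 2 * ∑ i ∈ range (τ ω), ∫ ω', ξ i ω' ∂μ - τ ω := by
    funext ω
    simp [sum_sub_distrib, mul_sum]
  rw [hsplit, integral_sub hS_int (integrable_const _),
    integral_sub (hM_int.const_mul 2) hτint, integral_const_mul, ← hwald, hS]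
  simp
  ring

end HittingTime

theorem rho_tendsto_delta_general
    {Ω : Type*} [MeasurableSpace Ω] (μ : Measure Ω) [IsProbabilityMeasure μ]
    (p : ℕ → ℝ)
    (δ : ℝ)
    (hδ : Tendsto (fun k : ℕ => ∑ i ∈ Finset.range k, (2 * p i - 1)) atTop (nhds δ))
    (ξ : ℕ → Ω → ℝ) (hmeas : ∀ i, Measurable (ξ i))
    (hval : ∀ i ω, ξ i ω = 0 ∨ ξ i ω = 1)
    (hind : iIndepFun ξ μ)
    (hmean : ∀ i, ∫ ω, ξ i ω ∂μ = p i)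
    (T : ℕ → Ω → ℕ) (hTmeas : ∀ n, Measurable (T n))
    (hT : ∀ n ω, T n ω = sInf {k : ℕ | ∑ i ∈ Finset.range k, (1 - ξ i ω) = (n:ℝ)})
    (hfin : ∀ n : ℕ, ∀ᵐ ω ∂μ, ∃ k : ℕ, ∑ i ∈ Finset.range k, (1 - ξ i ω) = (n:ℝ))
    (hTint : ∀ n, Integrable (fun ω => (T n ω : ℝ)) μ) :
    (∀ n : ℕ, ∫ ω, ((∑ k ∈ Finset.range (T n ω), ξ k ω) - n) ∂μ =
        ∫ ω, (∑ i ∈ Finset.range (T n ω), (2 * p i - 1)) ∂μ) ∧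
    Tendsto (fun n : ℕ => ∫ ω, (∑ i ∈ Finset.range (T n ω), (2 * p i - 1)) ∂μ)
      atTop (nhds δ) := by
  have hξ : ∀ i ω, ξ i ω ∈ Set.Icc (0 : ℝ) 1 := fun i ω => by
    rcases hval i ω with h | h <;> simp [h]
  refine ⟨fun n => ?_, tendsto_integral_comp_of_tendsto_atTop hδ
    (fun n => (hTmeas n).aemeasurable) ?_⟩
  · simpa only [hmean] using integral_sum_range_sub_eq_integral_sum_range_two_mul_integral_sub_one
      hmeas hξ hind (hTmeas n) (hT n) (hfin n) (hTint n)
  · filter_upwards [ae_all_iff.2 fun n => ae_le_of_eq_sInf (fun i ω => (hξ i ω).1) (hT n) (hfin n)]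
      with ω hω
    exact tendsto_atTop_mono hω tendsto_id

theorem rho_tendsto_delta
    {Ω : Type*} [MeasurableSpace Ω] (μ : Measure Ω) [IsProbabilityMeasure μ]
    (p : ℕ → ℝ) (hp : ∀ i, p i ∈ Set.Ioo (0:ℝ) 1)
    (δ : ℝ)
    (hδ : Tendsto (fun k : ℕ => ∑ i ∈ Finset.range k, (2 * p i - 1)) atTop (nhds δ))
    (ξ : ℕ → Ω → ℝ) (hmeas : ∀ i, Measurable (ξ i))
    (hval : ∀ i ω, ξ i ω = 0 ∨ ξ i ω = 1)
    (hind : iIndepFun ξ μ)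
    (hmean : ∀ i, ∫ ω, ξ i ω ∂μ = p i)
    (T : ℕ → Ω → ℕ) (hTmeas : ∀ n, Measurable (T n))
    (hT : ∀ n ω, T n ω = sInf {k : ℕ | ∑ i ∈ Finset.range k, (1 - ξ i ω) = (n:ℝ)})
    (hfin : ∀ n : ℕ, ∀ᵐ ω ∂μ, ∃ k : ℕ, ∑ i ∈ Finset.range k, (1 - ξ i ω) = (n:ℝ))
    (hTint : ∀ n, Integrable (fun ω => (T n ω : ℝ)) μ) :
    (∀ n : ℕ, ∫ ω, ((∑ k ∈ Finset.range (T n ω), ξ k ω) - n) ∂μ =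
        ∫ ω, (∑ i ∈ Finset.range (T n ω), (2 * p i - 1)) ∂μ) ∧
    Tendsto (fun n : ℕ => ∫ ω, (∑ i ∈ Finset.range (T n ω), (2 * p i - 1)) ∂μ)
      atTop (nhds δ) :=
  rho_tendsto_delta_general μ p δ hδ ξ hmeas hval hind hmean T hTmeas hT hfin hTint
end

section
/- In the transient example environment: for n > 3, ρ(n) - 1 = E[(1/2)^{C(T_n)}], where C(x) = #{j ≤ x : p_j < 1/2} and T_n is the time of the n-th failure; consequently ρ(n) - 1 ≥ (1/√(log n)) P(T_n ≤ 3n) for all sufficiently large n. -/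
/-!
Past the third cookie, the only cookies with `p_j < 1/2` sit at `j = 4 ^ 4 ^ m`, where the
drift `2 p_j - 1` is `-(1/2)^m`; all others have drift `0`. Hence the drift accumulated over
the first `x ≥ 3` cookies telescopes to `2 - ∑_{m ≤ C(x)} (1/2)^m = 1 + (1/2)^C(x)`, and
`T_n ≥ n > 3` turns this into `ρ(n) - 1 = E[(1/2)^C(T_n)]`. Conversely `4 ^ 4 ^ C(x) ≤ x`, so
`(1/2)^C(x) ≥ 1 / √(log_4 x)`; since `log_4 (3n) ≤ log n` for large `n`, Markov's inequality
on `{T_n ≤ 3n}` gives the lower bound.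
-/

open Classical MeasureTheory ProbabilityTheory Finset Filter

noncomputable def cookieP (k : ℕ) : ℝ :=
  if 1 ≤ k ∧ k ≤ 3 then 5/6
  else if h : ∃ m : ℕ, 1 ≤ m ∧ k = 4^(4^m) then 1/2 - (1/2)^(h.choose + 1)
  else 1/2

/-- number of negative-drift cookies among the first `x` cookies -/
noncomputable def negCookieCount (x : ℕ) : ℕ :=
  ((Finset.Icc 1 x).filter (fun j => cookieP j < 1/2)).card

theorem strictMono_four_pow_four_pow : StrictMono fun m : ℕ => 4 ^ 4 ^ m :=
  (pow_right_strictMono₀ (by norm_num)).comp (pow_right_strictMono₀ (by norm_num))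

theorem four_le_four_pow_four_pow (m : ℕ) : 4 ≤ 4 ^ 4 ^ m :=
  le_self_pow₀ (by norm_num) (by positivity)

namespace cookieP

theorem of_le_three {k : ℕ} (hk1 : 1 ≤ k) (hk3 : k ≤ 3) : cookieP k = 5 / 6 := by
  rw [cookieP, if_pos ⟨hk1, hk3⟩]

theorem four_pow_four_pow {m : ℕ} (hm : 1 ≤ m) :
    cookieP (4 ^ 4 ^ m) = 1 / 2 - (1 / 2) ^ (m + 1) := by
  have hex : ∃ m' : ℕ, 1 ≤ m' ∧ 4 ^ 4 ^ m = 4 ^ 4 ^ m' := ⟨m, hm, rfl⟩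
  have := four_le_four_pow_four_pow m
  rw [cookieP, if_neg (by omega), dif_pos hex,
    ← strictMono_four_pow_four_pow.injective hex.choose_spec.2]

theorem lt_half_iff {k : ℕ} : cookieP k < 1 / 2 ↔ ∃ m : ℕ, 1 ≤ m ∧ k = 4 ^ 4 ^ m := by
  constructor
  · intro h
    by_contra hk
    unfold cookieP at h
    split_ifs at h <;> norm_num at h
  · rintro ⟨m, hm, rfl⟩
    rw [four_pow_four_pow hm]
    have : (0 : ℝ) < (1 / 2) ^ (m + 1) := by positivity
    linarith

theorem eq_half_of_not_lt {k : ℕ} (hk : 4 ≤ k) (h : ¬cookieP k < 1 / 2) :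
    cookieP k = 1 / 2 := by
  rw [lt_half_iff] at h
  rw [cookieP, if_neg (by omega), dif_neg h]

end cookieP

namespace negCookieCount

theorem succ (x : ℕ) :
    negCookieCount (x + 1) = negCookieCount x + if cookieP (x + 1) < 1 / 2 then 1 else 0 := by
  rw [negCookieCount, negCookieCount, ← insert_Icc_right_eq_Icc_add_one (by omega), filter_insert]
  split_ifs
  · rw [card_insert_of_notMem (by simp)]
  · rfl

theorem mono : Monotone negCookieCount := fun _ _ h =>
  card_le_card (filter_subset_filter _ (Icc_subset_Icc_right h))

theorem three : negCookieCount 3 = 0 := by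
  simp only [negCookieCount, card_eq_zero, filter_eq_empty_iff, mem_Icc]
  intro j hj
  rw [cookieP.of_le_three hj.1 hj.2]
  norm_num

theorem four_pow_four_pow {m : ℕ} (hm : 1 ≤ m) : negCookieCount (4 ^ 4 ^ m) = m := by
  have hg := strictMono_four_pow_four_pow
  have : (Icc 1 (4 ^ 4 ^ m)).filter (fun j => cookieP j < 1 / 2) =
      (Icc 1 m).image (4 ^ 4 ^ ·) := by
    ext j
    simp only [mem_filter, mem_Icc, mem_image, cookieP.lt_half_iff]
    constructor
    · rintro ⟨⟨-, hj⟩, m', hm', rfl⟩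
      exact ⟨m', ⟨hm', hg.le_iff_le.mp hj⟩, rfl⟩
    · rintro ⟨m', ⟨hm', hm'm⟩, rfl⟩
      have := four_le_four_pow_four_pow m'
      exact ⟨⟨by omega, hg.monotone hm'm⟩, m', hm', rfl⟩
  rw [negCookieCount, this, card_image_of_injective _ hg.injective, Nat.card_Icc]
  omega

theorem four_pow_four_pow_sub_one {m : ℕ} (hm : 1 ≤ m) :
    negCookieCount (4 ^ 4 ^ m - 1) = m - 1 := by
  have h4 := four_le_four_pow_four_pow m
  have := succ (4 ^ 4 ^ m - 1)
  rw [Nat.sub_add_cancel (by omega), four_pow_four_pow hm,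
    if_pos (cookieP.lt_half_iff.mpr ⟨m, hm, rfl⟩)] at this
  omega

theorem four_pow_four_pow_le {x : ℕ} (hx : 4 ≤ x) : 4 ^ 4 ^ negCookieCount x ≤ x := by
  set C := negCookieCount x
  rcases Nat.eq_zero_or_pos C with h0 | hpos
  · simpa [h0] using hx
  by_contra! hlt
  have : C ≤ C - 1 := by
    calc C ≤ negCookieCount (4 ^ 4 ^ C - 1) := mono (by omega)
      _ = C - 1 := four_pow_four_pow_sub_one hpos
  omega

end negCookieCount

theorem two_mul_cookieP_sub_one {k : ℕ} (hk : 4 ≤ k) :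
    2 * cookieP k - 1 = (1 / 2) ^ negCookieCount k - (1 / 2) ^ negCookieCount (k - 1) := by
  by_cases hneg : cookieP k < 1 / 2
  · obtain ⟨m, hm, rfl⟩ := cookieP.lt_half_iff.mp hneg
    obtain ⟨m, rfl⟩ : ∃ m', m = m' + 1 := ⟨m - 1, by omega⟩
    rw [cookieP.four_pow_four_pow hm, negCookieCount.four_pow_four_pow hm,
      negCookieCount.four_pow_four_pow_sub_one hm, Nat.add_sub_cancel]
    ring
  · obtain ⟨x, rfl⟩ : ∃ x, k = x + 1 := ⟨k - 1, by omega⟩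
    rw [cookieP.eq_half_of_not_lt hk hneg, negCookieCount.succ, if_neg hneg, Nat.add_sub_cancel]
    ring

theorem sum_two_mul_cookieP_sub_one {x : ℕ} (hx : 3 ≤ x) :
    ∑ k ∈ range x, (2 * cookieP (k + 1) - 1) = 1 + (1 / 2) ^ negCookieCount x := by
  induction x, hx using Nat.le_induction with
  | base =>
    simp only [sum_range_succ, sum_range_zero, negCookieCount.three,
      cookieP.of_le_three (k := 1) le_rfl (by norm_num),
      cookieP.of_le_three (k := 2) (by norm_num) (by norm_num),
      cookieP.of_le_three (k := 3) (by norm_num) le_rfl]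
    norm_num
  | succ x hx ih =>
    rw [sum_range_succ, ih, two_mul_cookieP_sub_one (by omega), Nat.add_sub_cancel]
    ring

theorem four_pow_negCookieCount_le_logb {x : ℕ} (hx : 4 ≤ x) :
    (4 : ℝ) ^ negCookieCount x ≤ Real.logb 4 x := by
  rw [Real.le_logb_iff_rpow_le (by norm_num) (by positivity)]
  exact_mod_cast negCookieCount.four_pow_four_pow_le hx

theorem one_div_sqrt_logb_le_half_pow_negCookieCount {x : ℕ} (hx : 4 ≤ x) :
    1 / √(Real.logb 4 x) ≤ (1 / 2) ^ negCookieCount x := by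
  have h4 : (4 : ℝ) ^ negCookieCount x = ((2 : ℝ) ^ negCookieCount x) ^ 2 := by
    rw [← pow_mul, mul_comm, pow_mul]; norm_num
  have hsqrt : (2 : ℝ) ^ negCookieCount x ≤ √(Real.logb 4 x) :=
    Real.le_sqrt_of_sq_le (h4 ▸ four_pow_negCookieCount_le_logb hx)
  rw [div_pow, one_pow]
  exact one_div_le_one_div_of_le (by positivity) hsqrt

theorem eventually_logb_four_three_mul_le_log :
    ∀ᶠ n : ℕ in atTop, Real.logb 4 (3 * n) ≤ Real.log n := by
  have hlog4 : 1 < Real.log 4 := by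
    rw [Real.lt_log_iff_exp_lt (by norm_num)]
    exact Real.exp_one_lt_d9.trans (by norm_num)
  filter_upwards [eventually_gt_atTop 0,
    (Real.tendsto_log_atTop.comp tendsto_natCast_atTop_atTop).eventually_ge_atTop
      (Real.log 3 / (Real.log 4 - 1))] with n hn hlog
  rw [Function.comp_apply, div_le_iff₀ (by linarith)] at hlog
  rw [Real.logb, div_le_iff₀ (by linarith), Real.log_mul (by norm_num) (by positivity)]
  linear_combination hlog

theorem le_of_sum_one_sub_eq {ξ : ℕ → ℝ} (hξ : ∀ i, 0 ≤ ξ i) {k n : ℕ}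
    (h : ∑ i ∈ range k, (1 - ξ i) = n) : n ≤ k := by
  have : (n : ℝ) ≤ k :=
    calc (n : ℝ) = ∑ i ∈ range k, (1 - ξ i) := h.symm
      _ ≤ ∑ i ∈ range k, (1 : ℝ) := sum_le_sum fun i _ => by linarith [hξ i]
      _ = k := by simp
  exact_mod_cast this

section Expectation

variable {Ω : Type*} [MeasurableSpace Ω] {μ : Measure Ω} {τ : Ω → ℕ}

theorem integrable_half_pow_negCookieCount [IsFiniteMeasure μ] (hτ : Measurable τ) :
    Integrable (fun ω => (1 / 2 : ℝ) ^ negCookieCount (τ ω)) μ := by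
  have hmeas : Measurable fun k : ℕ => (1 / 2 : ℝ) ^ negCookieCount k := measurable_from_top
  refine Integrable.of_bound (hmeas.comp hτ).aestronglyMeasurable 1
    (Eventually.of_forall fun ω => ?_)
  rw [Real.norm_of_nonneg (by positivity)]
  exact pow_le_one₀ (by norm_num) (by norm_num)

theorem integral_sum_two_mul_cookieP_sub_one_sub_one [IsProbabilityMeasure μ]
    (hτ : Measurable τ) (h3 : ∀ᵐ ω ∂μ, 3 ≤ τ ω) :
    (∫ ω, ∑ k ∈ range (τ ω), (2 * cookieP (k + 1) - 1) ∂μ) - 1 =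
      ∫ ω, (1 / 2 : ℝ) ^ negCookieCount (τ ω) ∂μ := by
  rw [integral_congr_ae (h3.mono fun ω => sum_two_mul_cookieP_sub_one),
    integral_add (integrable_const 1) (integrable_half_pow_negCookieCount hτ)]
  simp

theorem one_div_sqrt_mul_measureReal_le_integral [IsFiniteMeasure μ] (hτ : Measurable τ)
    {x : ℕ} (hx : 4 ≤ x) {L : ℝ} (hL : Real.logb 4 x ≤ L) :
    1 / √L * μ.real {ω | τ ω ≤ x} ≤
      ∫ ω, (1 / 2 : ℝ) ^ negCookieCount (τ ω) ∂μ := by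
  have hlogb : 0 < Real.logb 4 x :=
    Real.logb_pos (by norm_num) (by exact_mod_cast (by omega : 1 < x))
  have hbound : ∀ y ≤ x, 1 / √L ≤ (1 / 2 : ℝ) ^ negCookieCount y := fun y hy =>
    calc 1 / √L ≤ 1 / √(Real.logb 4 x) :=
          one_div_le_one_div_of_le (Real.sqrt_pos.mpr hlogb) (Real.sqrt_le_sqrt hL)
      _ ≤ (1 / 2) ^ negCookieCount x := one_div_sqrt_logb_le_half_pow_negCookieCount hx
      _ ≤ (1 / 2) ^ negCookieCount y :=
          pow_le_pow_of_le_one (by norm_num) (by norm_num) (negCookieCount.mono hy)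
  calc 1 / √L * μ.real {ω | τ ω ≤ x}
      ≤ 1 / √L * μ.real {ω | 1 / √L ≤ (1 / 2 : ℝ) ^ negCookieCount (τ ω)} := by
        gcongr
        exacts [measure_ne_top _ _, hbound _]
    _ ≤ ∫ ω, (1 / 2 : ℝ) ^ negCookieCount (τ ω) ∂μ :=
        mul_meas_ge_le_integral_of_nonneg (Eventually.of_forall fun ω => by positivity)
          (integrable_half_pow_negCookieCount hτ) _

end Expectation

theorem transient_example_rho_lower_bound_general
    {Ω : Type*} [MeasurableSpace Ω] (μ : Measure Ω) [IsProbabilityMeasure μ]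
    (ξ : ℕ → Ω → ℝ)
    (hval : ∀ i ω, ξ i ω = 0 ∨ ξ i ω = 1)
    (T : ℕ → Ω → ℕ) (hTmeas : ∀ n, Measurable (T n))
    (hT : ∀ n ω, T n ω = sInf {k : ℕ | ∑ i ∈ Finset.range k, (1 - ξ i ω) = (n:ℝ)})
    (hfin : ∀ n : ℕ, ∀ᵐ ω ∂μ, ∃ k : ℕ, ∑ i ∈ Finset.range k, (1 - ξ i ω) = (n:ℝ)) :
    (∀ n : ℕ, 3 < n →
      (∫ ω, (∑ k ∈ Finset.range (T n ω), (2 * cookieP (k + 1) - 1)) ∂μ) - 1 =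
        ∫ ω, ((1:ℝ)/2)^(negCookieCount (T n ω)) ∂μ) ∧
    ∀ᶠ n : ℕ in atTop,
      (1 / Real.sqrt (Real.log n)) * (μ {ω | T n ω ≤ 3 * n}).toReal ≤
        (∫ ω, (∑ k ∈ Finset.range (T n ω), (2 * cookieP (k + 1) - 1)) ∂μ) - 1 := by
  have hξ : ∀ i ω, 0 ≤ ξ i ω := fun i ω => by rcases hval i ω with h | h <;> simp [h]
  have hTn : ∀ n, ∀ᵐ ω ∂μ, n ≤ T n ω := fun n => by
    filter_upwards [hfin n] with ω hω
    rw [hT]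
    exact le_of_sum_one_sub_eq (hξ · ω) (Nat.sInf_mem hω)
  have hρ : ∀ n : ℕ, 3 < n →
      (∫ ω, (∑ k ∈ Finset.range (T n ω), (2 * cookieP (k + 1) - 1)) ∂μ) - 1 =
        ∫ ω, ((1:ℝ)/2)^(negCookieCount (T n ω)) ∂μ := fun n hn =>
    integral_sum_two_mul_cookieP_sub_one_sub_one (hTmeas n) ((hTn n).mono fun ω h => by omega)
  refine ⟨hρ, ?_⟩
  filter_upwards [eventually_gt_atTop 3, eventually_logb_four_three_mul_le_log] with n hn hlog
  rw [hρ n hn, ← measureReal_def]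
  exact one_div_sqrt_mul_measureReal_le_integral (hTmeas n) (by omega) (by exact_mod_cast hlog)

theorem transient_example_rho_lower_bound
    {Ω : Type*} [MeasurableSpace Ω] (μ : Measure Ω) [IsProbabilityMeasure μ]
    (ξ : ℕ → Ω → ℝ) (hmeas : ∀ i, Measurable (ξ i))
    (hval : ∀ i ω, ξ i ω = 0 ∨ ξ i ω = 1)
    (hind : iIndepFun ξ μ)
    (hmean : ∀ i, ∫ ω, ξ i ω ∂μ = cookieP (i + 1))
    (T : ℕ → Ω → ℕ) (hTmeas : ∀ n, Measurable (T n))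
    (hT : ∀ n ω, T n ω = sInf {k : ℕ | ∑ i ∈ Finset.range k, (1 - ξ i ω) = (n:ℝ)})
    (hfin : ∀ n : ℕ, ∀ᵐ ω ∂μ, ∃ k : ℕ, ∑ i ∈ Finset.range k, (1 - ξ i ω) = (n:ℝ))
    (hTint : ∀ n, Integrable (fun ω => (T n ω : ℝ)) μ) :
    (∀ n : ℕ, 3 < n →
      (∫ ω, (∑ k ∈ Finset.range (T n ω), (2 * cookieP (k + 1) - 1)) ∂μ) - 1 =
        ∫ ω, ((1:ℝ)/2)^(negCookieCount (T n ω)) ∂μ) ∧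
    ∀ᶠ n : ℕ in atTop,
      (1 / Real.sqrt (Real.log n)) * (μ {ω | T n ω ≤ 3 * n}).toReal ≤
        (∫ ω, (∑ k ∈ Finset.range (T n ω), (2 * cookieP (k + 1) - 1)) ∂μ) - 1 :=
  transient_example_rho_lower_bound_general μ ξ hval T hTmeas hT hfin
end
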